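/- Let κ ≥ 3 be a cardinal and let α ≥ 1 be a countable ordinal. Given a₁, a₂, b₁, b₂ ∈ T_κ^{[α]} with d(a₁, a₂) = d(b₁, b₂), there exists an isometry ψ of T_κ^{[α]} such that ψ(a₁) = b₁ and ψ(a₂) = b₂. In particular, T_κ^{[α]} is homogeneous. -/

import Mathlib

open Set Filter

noncomputable section

/-- `C` is a valid label set for the valence cardinal `κ`:
`|C| = κ` if `κ` is infinite and `|C| + 1 = κ` (i.e. `|C| = κ - 1`) if `κ` is finite. -/
def IsLabelSet (κ : Cardinal) (C : Type) : Prop :=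
  (Cardinal.aleph0 ≤ κ → Cardinal.mk C = κ) ∧ (κ < Cardinal.aleph0 → Cardinal.mk C + 1 = κ)

/-- An ordinal is countable. -/
def IsCountableOrdinal (o : Ordinal) : Prop := o.card ≤ Cardinal.aleph0

/-- One-step Cantor–Bendixson derivative of a set: its non-isolated points. -/
def cbStep {X : Type*} [TopologicalSpace X] (A : Set X) : Set X :=
  {x | x ∈ A ∧ AccPt x (Filter.principal A)}

/-- The iterated Cantor–Bendixson derivative of a set. -/
def cbDeriv {X : Type*} [TopologicalSpace X] (A : Set X) (o : Ordinal) : Set X :=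
  Ordinal.limitRecOn o A (fun _ ih => cbStep ih)
    (fun o _ ih => ⋂ (o' : Ordinal) (h : o' < o), ih o' h)

/-- The Cantor–Bendixson rank of a set: the least ordinal `γ` such that the `(γ+1)`-st
Cantor–Bendixson derivative equals the `γ`-th one. -/
def cbRank {X : Type*} [TopologicalSpace X] (A : Set X) : Ordinal :=
  sInf {γ | cbDeriv A (γ + 1) = cbDeriv A γ}

theorem cbDeriv_zero {X : Type*} [TopologicalSpace X] (A : Set X) : cbDeriv A 0 = A :=
  Ordinal.limitRecOn_zero ..

theorem cbDeriv_one {X : Type*} [TopologicalSpace X] (A : Set X) :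
    cbDeriv A 1 = cbStep A := by
  have : (1 : Ordinal) = Order.succ 0 := by
    rw [← Ordinal.add_one_eq_succ, zero_add]
  rw [cbDeriv, this, Ordinal.limitRecOn_succ]
  rw [← cbDeriv, cbDeriv_zero]

theorem cbStep_empty {X : Type*} [TopologicalSpace X] : cbStep (∅ : Set X) = ∅ := by
  ext x; simp [cbStep]

theorem cbRank_empty {X : Type*} [TopologicalSpace X] : cbRank (∅ : Set X) = 0 := by
  refine le_antisymm ?_ zero_le
  refine csInf_le' ?_
  show cbDeriv (∅ : Set X) (0 + 1) = cbDeriv (∅ : Set X) 0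
  rw [zero_add, cbDeriv_one, cbDeriv_zero, cbStep_empty]

/-- A point of Dyubina's universal real tree over the label set `C` (with distinguished label
`z`): a function `(-∞, ρ) → C`, encoded as a total function on `ℝ` which takes the value `z`
on `[ρ, ∞)`, which is eventually `z` near `-∞` and piecewise constant from the right. -/
structure UTree (C : Type) (z : C) where
  ρ : ℝ
  f : ℝ → C
  apply_eq_of_ge : ∀ t, ρ ≤ t → f t = z
  eventually_zero : ∃ s, s ≤ ρ ∧ ∀ t, t < s → f t = z
  piecewise_const : ∀ t, t < ρ → ∃ ε > 0, ∀ u, t ≤ u → u ≤ t + ε → u < ρ → f u = f t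

namespace UTree

variable {C : Type} {z : C}

theorem ext' {a b : UTree C z} (h1 : a.ρ = b.ρ) (h2 : a.f = b.f) : a = b := by
  cases a; cases b; cases h1; cases h2; rfl

/-- The partial order `⪯` : `a ⪯ b` iff `a` is the restriction of `b` to `(-∞, ρ_a)`. -/
protected def le (a b : UTree C z) : Prop :=
  a.ρ ≤ b.ρ ∧ ∀ t, t < a.ρ → a.f t = b.f t

/-- The strict order `≺`. -/
protected def lt (a b : UTree C z) : Prop := a.le b ∧ a ≠ b

/-- The set of times up to which `a` and `b` agree. -/
def agreeSet (a b : UTree C z) : Set ℝ :=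
  {t | t ≤ min a.ρ b.ρ ∧ ∀ u, u < t → a.f u = b.f u}

theorem agreeSet_nonempty (a b : UTree C z) : (agreeSet a b).Nonempty := by
  obtain ⟨s₁, hs₁, h₁⟩ := a.eventually_zero
  obtain ⟨s₂, hs₂, h₂⟩ := b.eventually_zero
  refine ⟨min s₁ s₂, le_min ((min_le_left _ _).trans hs₁) ((min_le_right _ _).trans hs₂), ?_⟩
  intro u hu
  rw [h₁ u (lt_of_lt_of_le hu (min_le_left _ _)), h₂ u (lt_of_lt_of_le hu (min_le_right _ _))]

theorem agreeSet_bddAbove (a b : UTree C z) : BddAbove (agreeSet a b) :=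
  ⟨min a.ρ b.ρ, fun _ ht => ht.1⟩

/-- `ρ_{a ∧ b}`, the height of the wedge of `a` and `b`. -/
def wedgeρ (a b : UTree C z) : ℝ := sSup (agreeSet a b)

theorem wedgeρ_le_min (a b : UTree C z) : wedgeρ a b ≤ min a.ρ b.ρ :=
  csSup_le (agreeSet_nonempty a b) fun _ ht => ht.1

theorem agree_of_lt_wedgeρ (a b : UTree C z) {u : ℝ} (hu : u < wedgeρ a b) :
    a.f u = b.f u := by
  obtain ⟨t, ht, hut⟩ := exists_lt_of_lt_csSup (agreeSet_nonempty a b) hu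
  exact ht.2 u hut

theorem le_wedgeρ {a b : UTree C z} {t : ℝ} (ht : t ∈ agreeSet a b) : t ≤ wedgeρ a b :=
  le_csSup (agreeSet_bddAbove a b) ht

theorem wedgeρ_comm (a b : UTree C z) : wedgeρ a b = wedgeρ b a := by
  unfold wedgeρ agreeSet
  congr 1
  ext t
  constructor <;> rintro ⟨h1, h2⟩ <;>
    exact ⟨by rwa [min_comm], fun u hu => (h2 u hu).symm⟩

theorem wedgeρ_self (a : UTree C z) : wedgeρ a a = a.ρ := by
  refine le_antisymm ((wedgeρ_le_min a a).trans (by simp)) ?_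
  exact le_wedgeρ ⟨by simp, fun _ _ => rfl⟩

/-- Restriction of `a` to `(-∞, s)` for `s ≤ ρ_a`. -/
def restrict (a : UTree C z) (s : ℝ) (hs : s ≤ a.ρ) : UTree C z where
  ρ := s
  f := fun t => if t < s then a.f t else z
  apply_eq_of_ge := fun t ht => by
    show (if t < s then a.f t else z) = z
    rw [if_neg (not_lt.mpr ht)]
  eventually_zero := by
    obtain ⟨s', hs', h'⟩ := a.eventually_zero
    refine ⟨min s' s, min_le_right _ _, fun t ht => ?_⟩
    show (if t < s then a.f t else z) = z
    by_cases h : t < s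
    · rw [if_pos h]; exact h' t (lt_of_lt_of_le ht (min_le_left _ _))
    · rw [if_neg h]
  piecewise_const := fun t ht => by
    obtain ⟨ε, hε, h⟩ := a.piecewise_const t (lt_of_lt_of_le ht hs)
    refine ⟨ε, hε, fun u hu1 hu2 hu3 => ?_⟩
    show (if u < s then a.f u else z) = (if t < s then a.f t else z)
    rw [if_pos hu3, if_pos ht]
    exact h u hu1 hu2 (lt_of_lt_of_le hu3 hs)

/-- The wedge `a ∧ b`: the restriction of `a` to `(-∞, ρ_{a ∧ b})`. -/
def wedge (a b : UTree C z) : UTree C z :=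
  a.restrict (wedgeρ a b) ((wedgeρ_le_min a b).trans (min_le_left _ _))

theorem min_wedgeρ_le (a b c : UTree C z) :
    min (wedgeρ a b) (wedgeρ b c) ≤ wedgeρ a c := by
  refine le_wedgeρ ⟨le_min ?_ ?_, fun u hu => ?_⟩
  · exact (min_le_left _ _).trans ((wedgeρ_le_min a b).trans (min_le_left _ _))
  · exact (min_le_right _ _).trans ((wedgeρ_le_min b c).trans (min_le_right _ _))
  · have h1 : a.f u = b.f u :=
      agree_of_lt_wedgeρ a b (lt_of_lt_of_le hu (min_le_left _ _))
    have h2 : b.f u = c.f u :=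
      agree_of_lt_wedgeρ b c (lt_of_lt_of_le hu (min_le_right _ _))
    exact h1.trans h2

/-- The metric `d(a,b) = ρ_a + ρ_b - 2 ρ_{a ∧ b}` on the universal real tree. -/
instance : MetricSpace (UTree C z) where
  dist a b := a.ρ + b.ρ - 2 * wedgeρ a b
  dist_self a := by simp [wedgeρ_self]; ring
  dist_comm a b := by simp only [wedgeρ_comm a b]; ring
  dist_triangle a b c := by
    have hmin := min_wedgeρ_le a b c
    have h1 : wedgeρ a b ≤ b.ρ := (wedgeρ_le_min a b).trans (min_le_right _ _)
    have h2 : wedgeρ b c ≤ b.ρ := (wedgeρ_le_min b c).trans (min_le_left _ _)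
    rcases min_cases (wedgeρ a b) (wedgeρ b c) with ⟨heq, hle⟩ | ⟨heq, hle⟩ <;>
      (rw [heq] at hmin; (try dsimp); linarith)
  eq_of_dist_eq_zero := by
    intro a b h
    have h1 : wedgeρ a b ≤ a.ρ := (wedgeρ_le_min a b).trans (min_le_left _ _)
    have h2 : wedgeρ a b ≤ b.ρ := (wedgeρ_le_min a b).trans (min_le_right _ _)
    have hd : a.ρ + b.ρ - 2 * wedgeρ a b = 0 := h
    have ha : a.ρ = wedgeρ a b := by linarith
    have hb : b.ρ = wedgeρ a b := by linarith
    refine ext' (ha.trans hb.symm) (funext fun t => ?_)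
    by_cases ht : t < wedgeρ a b
    · exact agree_of_lt_wedgeρ a b ht
    · rw [a.apply_eq_of_ge t (ha.le.trans (not_lt.mp ht)),
        b.apply_eq_of_ge t (hb.le.trans (not_lt.mp ht))]

theorem dist_def (a b : UTree C z) : dist a b = a.ρ + b.ρ - 2 * wedgeρ a b := rfl

/-- The point `c_ℓ`: the constant function `(-∞, ℓ) → C` with value `z`. -/
def cconst (ℓ : ℝ) : UTree C z where
  ρ := ℓ
  f := fun _ => z
  apply_eq_of_ge := fun _ _ => rfl
  eventually_zero := ⟨ℓ, le_refl ℓ, fun _ _ => rfl⟩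
  piecewise_const := fun _ _ => ⟨1, one_pos, fun _ _ _ _ => rfl⟩

/-- The set of points at which `a` is locally non-constant from the left, whose closure is the
set `P_a`. -/
def badSet (a : UTree C z) : Set ℝ :=
  {t | t < a.ρ ∧ ∀ ε > 0, ∃ u ∈ Icc (t - ε) t, ∃ v ∈ Icc (t - ε) t, a.f u ≠ a.f v}

/-- The set `P_a`. -/
def Pset (a : UTree C z) : Set ℝ := closure (badSet a)

/-- The complexity of `a`: the Cantor–Bendixson rank of `P_a`. -/
def comp (a : UTree C z) : Ordinal := cbRank (Pset a)

/-- The complexity of a pair `a ≺ b`: the Cantor–Bendixson rank of `P_b ∩ [ρ_a, ρ_b]`. -/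
def pairComp (a b : UTree C z) : Ordinal := cbRank (Pset b ∩ Icc a.ρ b.ρ)

/-- `τ_a`: the maximum of all `s ≤ ρ_a` such that `a` is `z` below `s`. -/
def tau (a : UTree C z) : ℝ := sSup {s | s ≤ a.ρ ∧ ∀ t, t < s → a.f t = z}

/-- The tree `T_κ^{[α]}` of points of complexity at most `α`. -/
def level (z : C) (α : Ordinal) : Set (UTree C z) := {a | comp a ≤ α}

theorem Pset_cconst (ℓ : ℝ) : Pset (cconst ℓ : UTree C z) = ∅ := by
  have : badSet (cconst ℓ : UTree C z) = ∅ := by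
    ext t
    simp only [badSet, mem_setOf_eq, mem_empty_iff_false, iff_false, not_and]
    intro _
    push_neg
    exact ⟨1, one_pos, fun u _ v _ => rfl⟩
  rw [Pset, this, closure_empty]

theorem comp_cconst (ℓ : ℝ) : comp (cconst ℓ : UTree C z) = 0 := by
  rw [comp, Pset_cconst, cbRank_empty]

theorem cconst_mem_level {ℓ : ℝ} (α : Ordinal) : (cconst ℓ : UTree C z) ∈ level z α := by
  show comp _ ≤ α
  rw [comp_cconst]
  exact zero_le

/-- The canonical line `L_0 = {c_ℓ : ℓ ∈ ℝ}`. -/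
def L0 (z : C) : Set (UTree C z) := Set.range fun ℓ => (cconst ℓ : UTree C z)

/-- The extension of `a` by the label `c` on `[ρ_a, ρ_a + 1)`. -/
def extend (a : UTree C z) (c : C) : UTree C z where
  ρ := a.ρ + 1
  f := fun t => if t < a.ρ then a.f t else if t < a.ρ + 1 then c else z
  apply_eq_of_ge := fun t ht => by
    show (if t < a.ρ then a.f t else if t < a.ρ + 1 then c else z) = z
    rw [if_neg (not_lt.mpr (by linarith)), if_neg (not_lt.mpr ht)]
  eventually_zero := by
    obtain ⟨s, hs, h⟩ := a.eventually_zero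
    refine ⟨min s a.ρ, by have := min_le_right s a.ρ; linarith, fun t ht => ?_⟩
    show (if t < a.ρ then a.f t else if t < a.ρ + 1 then c else z) = z
    rw [if_pos (lt_of_lt_of_le ht (min_le_right _ _))]
    exact h t (lt_of_lt_of_le ht (min_le_left _ _))
  piecewise_const := by
    intro t ht
    by_cases htρ : t < a.ρ
    · obtain ⟨ε, hε, h⟩ := a.piecewise_const t htρ
      refine ⟨min ε ((a.ρ - t) / 2), lt_min hε (by linarith), fun u hu1 hu2 _ => ?_⟩
      have hu3 : u < a.ρ := by
        have := hu2.trans (add_le_add (le_refl t) (min_le_right _ _))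
        linarith
      show (if u < a.ρ then a.f u else if u < a.ρ + 1 then c else z) =
        (if t < a.ρ then a.f t else if t < a.ρ + 1 then c else z)
      rw [if_pos hu3, if_pos htρ]
      exact h u hu1 (hu2.trans (add_le_add (le_refl t) (min_le_left _ _))) hu3
    · refine ⟨(a.ρ + 1 - t) / 2, by linarith, fun u hu1 hu2 _ => ?_⟩
      have h1 : ¬u < a.ρ := by push_neg at htρ ⊢; linarith
      have h2 : u < a.ρ + 1 := by linarith
      show (if u < a.ρ then a.f u else if u < a.ρ + 1 then c else z) =
        (if t < a.ρ then a.f t else if t < a.ρ + 1 then c else z)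
      rw [if_neg h1, if_pos h2, if_neg htρ, if_pos ht]

end UTree

/-- A subset of a metric space is (geodesically) convex if it contains every point
metrically between two of its points. -/
def MetricConvex {X : Type*} [MetricSpace X] (S : Set X) : Prop :=
  ∀ x ∈ S, ∀ y ∈ S, ∀ w, dist x w + dist w y = dist x y → w ∈ S

/-- `D` is a direction at `x`: a connected component of the complement of `{x}`. -/
def IsDirectionAt {X : Type*} [TopologicalSpace X] (x : X) (D : Set X) : Prop :=
  ∃ y, y ≠ x ∧ D = connectedComponentIn {w | w ≠ x} y

/-- The valence of a space at a point: the number of connected components of the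
complement of that point. -/
def valenceAt {X : Type*} [TopologicalSpace X] (x : X) : Cardinal :=
  Cardinal.mk {D : Set X // IsDirectionAt x D}

/-- A real tree: a geodesic metric space in which any two points are joined by a unique arc. -/
def IsRealTree (X : Type*) [MetricSpace X] : Prop :=
  (∀ x y : X, ∃ γ : ℝ → X, γ 0 = x ∧ γ (dist x y) = y ∧
      ∀ s ∈ Icc (0 : ℝ) (dist x y), ∀ t ∈ Icc (0 : ℝ) (dist x y),
        dist (γ s) (γ t) = |s - t|) ∧
  (∀ (x y : X) (γ₁ γ₂ : Path x y), Function.Injective γ₁ → Function.Injective γ₂ →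
      Set.range γ₁ = Set.range γ₂)


open Topology

/-!
Two kinds of isometries of `T_κ^{[α]}` suffice. For `ρ_a = ρ_b`, exchanging at every time `t`
the labels `a(t)` and `b(t)` is an isometric involution of `T_κ` sending `a` to `b`. It creates
new points of `P` only at `ρ_a`; as every `P`-set is closed and countable (each of its points is
isolated from the right), the `α`-th Cantor–Bendixson derivative of `P` is empty exactly when
the complexity is at most `α`, so for `α ≥ 1` these relabellings preserve `T_κ^{[α]}`. Besides
them there are the reflections of the canonical line `L_0 = {c_ℓ}` in one of its points, which
carry every branch along rigidly.

A relabelling sends `x₁` to `c_{ρ_{x₁}}`; a second one (preceded by a reflection when `x₂` leaves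
`L_0` below that point) sends `x₂` into `L_0` as well, keeping `x₁`; reflections of `L_0` then
bring the pair to `(c_0, c_d)` with `d = d(x₁, x₂)`. Two pairs at the same distance are therefore
related by an isometry.
-/

section CantorBendixson

variable {X : Type*} [TopologicalSpace X]

theorem cbDeriv_add_one (A : Set X) (o : Ordinal) :
    cbDeriv A (o + 1) = cbStep (cbDeriv A o) := by
  rw [cbDeriv, Ordinal.limitRecOn_add_one]
  rfl

theorem cbDeriv_of_isSuccLimit (A : Set X) {o : Ordinal} (ho : Order.IsSuccLimit o) :
    cbDeriv A o = ⋂ o' < o, cbDeriv A o' := by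
  rw [cbDeriv, Ordinal.limitRecOn_limit _ _ _ _ ho]
  rfl

theorem cbStep_subset (A : Set X) : cbStep A ⊆ A := fun _ hx => hx.1

theorem cbStep_mono {A B : Set X} (h : A ⊆ B) : cbStep A ⊆ cbStep B :=
  fun _ hx => ⟨h hx.1, hx.2.mono (principal_mono.2 h)⟩

theorem cbStep_singleton (p : X) : cbStep ({p} : Set X) = ∅ := by
  refine eq_empty_of_forall_notMem fun x ⟨hx, hacc⟩ => ?_
  rw [mem_singleton_iff.1 hx, accPt_principal_iff_nhdsWithin, sdiff_self, nhdsWithin_empty] at hacc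
  exact hacc.ne rfl

theorem cbDeriv_mono {A B : Set X} (h : A ⊆ B) (o : Ordinal) : cbDeriv A o ⊆ cbDeriv B o := by
  induction o using Ordinal.limitRecOn with
  | zero => simpa only [cbDeriv_zero]
  | add_one o ih => simpa only [cbDeriv_add_one] using cbStep_mono ih
  | limit o ho ih =>
    simp only [cbDeriv_of_isSuccLimit _ ho]
    exact iInter₂_mono ih

theorem cbDeriv_antitone (A : Set X) : Antitone (cbDeriv A) := by
  intro o₁ o₂ h
  induction o₂ using Ordinal.limitRecOn with
  | zero => rw [nonpos_iff_eq_zero.1 h]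
  | add_one o ih =>
    rcases h.eq_or_lt with rfl | hlt
    · rfl
    · rw [cbDeriv_add_one]
      exact (cbStep_subset _).trans (ih (Order.le_of_lt_succ hlt))
  | limit o ho _ =>
    rcases h.eq_or_lt with rfl | hlt
    · rfl
    · rw [cbDeriv_of_isSuccLimit _ ho]
      exact iInter₂_subset o₁ hlt

theorem cbDeriv_subset (A : Set X) (o : Ordinal) : cbDeriv A o ⊆ A := by
  simpa only [cbDeriv_zero] using cbDeriv_antitone A (zero_le : 0 ≤ o)

theorem cbDeriv_singleton_of_one_le (p : X) {o : Ordinal} (ho : 1 ≤ o) :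
    cbDeriv ({p} : Set X) o = ∅ :=
  subset_empty_iff.1 <| (cbDeriv_antitone _ ho).trans <| by
    rw [cbDeriv_one, cbStep_singleton]

theorem isClosed_cbDeriv [T1Space X] {A : Set X} (hA : IsClosed A) (o : Ordinal) :
    IsClosed (cbDeriv A o) := by
  induction o using Ordinal.limitRecOn with
  | zero => rwa [cbDeriv_zero]
  | add_one o ih =>
    rw [cbDeriv_add_one]
    exact ih.inter (isClosed_derivedSet _)
  | limit o ho ih =>
    rw [cbDeriv_of_isSuccLimit _ ho]
    exact isClosed_biInter ih

theorem cbStep_union_subset {A B : Set X} (hA : IsClosed A) (hB : IsClosed B) :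
    cbStep (A ∪ B) ⊆ cbStep A ∪ cbStep B := by
  rintro x ⟨-, hacc⟩
  rw [← sup_principal, accPt_sup] at hacc
  refine hacc.imp (fun h => ⟨?_, h⟩) (fun h => ⟨?_, h⟩)
  · exact hA.closure_subset (derivedSet_subset_closure A h)
  · exact hB.closure_subset (derivedSet_subset_closure B h)

theorem cbDeriv_union_subset [T1Space X] {A B : Set X} (hA : IsClosed A) (hB : IsClosed B)
    (o : Ordinal) : cbDeriv (A ∪ B) o ⊆ cbDeriv A o ∪ cbDeriv B o := by
  induction o using Ordinal.limitRecOn with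
  | zero => simp only [cbDeriv_zero, subset_rfl]
  | add_one o ih =>
    simp only [cbDeriv_add_one]
    exact (cbStep_mono ih).trans
      (cbStep_union_subset (isClosed_cbDeriv hA o) (isClosed_cbDeriv hB o))
  | limit o ho ih =>
    intro x hx
    simp only [cbDeriv_of_isSuccLimit _ ho, mem_iInter₂, mem_union] at hx ⊢
    by_contra! hcon
    obtain ⟨⟨o₁, ho₁, hx₁⟩, ⟨o₂, ho₂, hx₂⟩⟩ := hcon
    have hmax : max o₁ o₂ < o := max_lt ho₁ ho₂
    rcases ih _ hmax (hx _ hmax) with h | h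
    · exact hx₁ (cbDeriv_antitone A (le_max_left _ _) h)
    · exact hx₂ (cbDeriv_antitone B (le_max_right _ _) h)

theorem cbDeriv_union_eq_empty [T1Space X] {A B : Set X} (hA : IsClosed A) (hB : IsClosed B)
    {o : Ordinal} (hAo : cbDeriv A o = ∅) (hBo : cbDeriv B o = ∅) : cbDeriv (A ∪ B) o = ∅ :=
  subset_empty_iff.1 <| by simpa only [hAo, hBo, union_empty] using cbDeriv_union_subset hA hB o

theorem cbDeriv_eq_of_le {A : Set X} {γ o : Ordinal} (hγ : cbDeriv A (γ + 1) = cbDeriv A γ)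
    (h : γ ≤ o) : cbDeriv A o = cbDeriv A γ := by
  induction o using Ordinal.limitRecOn with
  | zero => rw [nonpos_iff_eq_zero.1 h]
  | add_one o ih =>
    rcases h.eq_or_lt with rfl | hlt
    · rfl
    · rw [cbDeriv_add_one, ih (Order.le_of_lt_succ hlt), ← cbDeriv_add_one, hγ]
  | limit o ho ih =>
    refine (cbDeriv_antitone A h).antisymm fun x hx => ?_
    rw [cbDeriv_of_isSuccLimit _ ho, mem_iInter₂]
    intro o' ho'
    rcases le_total o' γ with h' | h'
    · exact cbDeriv_antitone A h' hx
    · rwa [ih o' ho' h']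

theorem cbRank_le_of_cbDeriv_eq_empty {A : Set X} {o : Ordinal} (h : cbDeriv A o = ∅) :
    cbRank A ≤ o :=
  csInf_le' (by rw [mem_ofPred_eq, cbDeriv_add_one, h, cbStep_empty])

theorem cbStep_image {Y : Type*} [TopologicalSpace Y] (e : X ≃ₜ Y) (A : Set X) :
    cbStep (e '' A) = e '' cbStep A := by
  have hacc (x : X) : AccPt (e x) (𝓟 (e '' A)) ↔ AccPt x (𝓟 A) := by
    rw [AccPt, ← map_principal, ← e.map_punctured_nhds_eq, ← map_inf e.injective]
    exact map_neBot_iff _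
  ext y
  constructor
  · rintro ⟨⟨x, hxA, rfl⟩, h⟩
    exact ⟨x, ⟨hxA, (hacc x).1 h⟩, rfl⟩
  · rintro ⟨x, ⟨hxA, h⟩, rfl⟩
    exact ⟨mem_image_of_mem e hxA, (hacc x).2 h⟩

theorem cbDeriv_image {Y : Type*} [TopologicalSpace Y] (e : X ≃ₜ Y) (A : Set X) (o : Ordinal) :
    cbDeriv (e '' A) o = e '' cbDeriv A o := by
  induction o using Ordinal.limitRecOn with
  | zero => simp only [cbDeriv_zero]
  | add_one o ih => rw [cbDeriv_add_one, cbDeriv_add_one, ih, cbStep_image]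
  | limit o ho ih =>
    rw [cbDeriv_of_isSuccLimit _ ho, cbDeriv_of_isSuccLimit _ ho, image_iInter₂ e.bijective]
    exact iInter₂_congr ih

theorem cbRank_image {Y : Type*} [TopologicalSpace Y] (e : X ≃ₜ Y) (A : Set X) :
    cbRank (e '' A) = cbRank A := by
  simp only [cbRank, cbDeriv_image, image_eq_image e.injective]

universe u v

theorem exists_cbDeriv_add_one_eq {X : Type u} [TopologicalSpace X] (A : Set X) :
    ∃ γ : Ordinal.{max u v}, cbDeriv A (γ + 1) = cbDeriv A γ := by
  -- Otherwise `cbDeriv A` would embed `Ordinal.{max u v}` into the small type `Set X`.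
  by_contra! hcon
  have hanti : StrictAnti (cbDeriv A : Ordinal.{max u v} → Set X) := fun o₁ o₂ h =>
    (cbDeriv_antitone A (Order.add_one_le_of_lt h)).trans_ssubset
      ((cbDeriv_antitone A (Order.le_succ o₁)).ssubset_of_ne (hcon o₁))
  exact not_small_ordinal.{u, v} (small_of_injective hanti.injective)

theorem Perfect.not_countable {Y : Type*} [MetricSpace Y] [CompleteSpace Y] {P : Set Y}
    (hP : Perfect P) (hne : P.Nonempty) : ¬P.Countable := by
  intro hcount
  obtain ⟨f, hrange, -, hinj⟩ := hP.exists_nat_bool_injection hne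
  have hmaps : MapsTo f univ P := mapsTo_univ_iff.2 fun x => hrange (mem_range_self x)
  have hle : Cardinal.mk (ℕ → Bool) ≤ Cardinal.aleph0 := Cardinal.mk_le_aleph0_iff.2 <|
    countable_univ_iff.1 <| hmaps.countable_of_injOn hinj.injOn hcount
  rw [← Cardinal.power_def, Cardinal.mk_bool, Cardinal.mk_nat] at hle
  exact hle.not_gt (Cardinal.cantor _)

theorem cbDeriv_eq_empty_of_cbRank_le {Y : Type u} [MetricSpace Y] [CompleteSpace Y] {A : Set Y}
    (hA : IsClosed A) (hcount : A.Countable) {o : Ordinal.{max u v}} (h : cbRank A ≤ o) :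
    cbDeriv A o = ∅ := by
  have hstab : cbDeriv A (cbRank A + 1) = cbDeriv A (cbRank A) :=
    csInf_mem (exists_cbDeriv_add_one_eq.{u, v} A)
  have hperf : Perfect (cbDeriv A (cbRank A)) :=
    ⟨isClosed_cbDeriv hA _, fun x hx => by
      rw [← hstab, cbDeriv_add_one] at hx
      exact hx.2⟩
  rw [cbDeriv_eq_of_le hstab h, ← not_nonempty_iff_eq_empty]
  exact fun hne => hperf.not_countable hne (hcount.mono (cbDeriv_subset A _))

end CantorBendixson

section Isometries

variable {X : Type*} [PseudoMetricSpace X]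

def PairIsometric (x₁ x₂ y₁ y₂ : X) : Prop :=
  ∃ ψ : X ≃ᵢ X, ψ x₁ = y₁ ∧ ψ x₂ = y₂

namespace PairIsometric

variable {x₁ x₂ y₁ y₂ w₁ w₂ : X}

theorem symm (h : PairIsometric x₁ x₂ y₁ y₂) : PairIsometric y₁ y₂ x₁ x₂ :=
  let ⟨ψ, h₁, h₂⟩ := h
  ⟨ψ.symm, ψ.symm_apply_eq.2 h₁.symm, ψ.symm_apply_eq.2 h₂.symm⟩

theorem trans (h : PairIsometric x₁ x₂ y₁ y₂) (h' : PairIsometric y₁ y₂ w₁ w₂) :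
    PairIsometric x₁ x₂ w₁ w₂ :=
  let ⟨ψ, h₁, h₂⟩ := h
  let ⟨ψ', h₁', h₂'⟩ := h'
  ⟨ψ.trans ψ', by rw [ψ.trans_apply, h₁, h₁'], by rw [ψ.trans_apply, h₂, h₂']⟩

theorem dist_eq (h : PairIsometric x₁ x₂ y₁ y₂) : dist y₁ y₂ = dist x₁ x₂ := by
  obtain ⟨ψ, rfl, rfl⟩ := h
  exact ψ.dist_eq x₁ x₂

end PairIsometric

def IsometryEquiv.subtypeOfInvolutive (F : X → X) (hF : Function.Involutive F)
    (hiso : Isometry F) {S : Set X} (hS : MapsTo F S S) : S ≃ᵢ S where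
  toFun x := ⟨F x, hS x.2⟩
  invFun x := ⟨F x, hS x.2⟩
  left_inv x := Subtype.ext (hF x)
  right_inv x := Subtype.ext (hF x)
  isometry_toFun := Isometry.of_dist_eq fun x y => hiso.dist_eq x y

end Isometries

namespace UTree

variable {C : Type} {z : C}

theorem exists_const_Icc (a : UTree C z) (t : ℝ) :
    ∃ ε > 0, ∀ u ∈ Icc t (t + ε), a.f u = a.f t := by
  by_cases ht : t < a.ρ
  · obtain ⟨ε, hε, h⟩ := a.piecewise_const t ht
    refine ⟨min ε ((a.ρ - t) / 2), lt_min hε (by linarith), fun u ⟨hu₁, hu₂⟩ => ?_⟩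
    have := min_le_left ε ((a.ρ - t) / 2)
    have := min_le_right ε ((a.ρ - t) / 2)
    exact h u hu₁ (by linarith) (by linarith)
  · refine ⟨1, one_pos, fun u hu => ?_⟩
    rw [a.apply_eq_of_ge u ((not_lt.1 ht).trans hu.1), a.apply_eq_of_ge t (not_lt.1 ht)]

theorem tau_le_ρ (a : UTree C z) : a.tau ≤ a.ρ :=
  let ⟨s, hs, h⟩ := a.eventually_zero
  csSup_le ⟨s, hs, h⟩ fun _ ht => ht.1

theorem le_tau {a : UTree C z} {s : ℝ} (hs : s ≤ a.ρ) (h : ∀ t < s, a.f t = z) : s ≤ a.tau :=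
  le_csSup ⟨a.ρ, fun _ ht => ht.1⟩ ⟨hs, h⟩

theorem apply_eq_of_lt_tau (a : UTree C z) {t : ℝ} (ht : t < a.tau) : a.f t = z := by
  obtain ⟨s₀, hs₀, h₀⟩ := a.eventually_zero
  obtain ⟨s, hs, hts⟩ := exists_lt_of_lt_csSup
    (s := {s | s ≤ a.ρ ∧ ∀ t < s, a.f t = z}) ⟨s₀, hs₀, h₀⟩ ht
  exact hs.2 t hts

theorem apply_tau_ne (a : UTree C z) (h : a.tau < a.ρ) : a.f a.tau ≠ z := by
  intro hz
  obtain ⟨ε, hε, hconst⟩ := a.exists_const_Icc a.tau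
  -- Otherwise `a` would vanish on a strictly longer initial interval.
  have : min (a.tau + ε) a.ρ ≤ a.tau := by
    refine le_tau (min_le_right _ _) fun t ht => ?_
    rcases lt_or_ge t a.tau with h₁ | h₁
    · exact a.apply_eq_of_lt_tau h₁
    · rw [hconst t ⟨h₁, (ht.trans_le (min_le_left _ _)).le⟩, hz]
  linarith [lt_min (lt_add_of_pos_right a.tau hε) h]

theorem tau_cconst (r : ℝ) : (cconst r : UTree C z).tau = r :=
  (tau_le_ρ _).antisymm (le_tau le_rfl fun _ _ => rfl)

theorem wedgeρ_cconst (r : ℝ) (y : UTree C z) : wedgeρ (cconst r) y = min r y.tau := by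
  refine le_antisymm (csSup_le (agreeSet_nonempty _ _) ?_) (le_wedgeρ ⟨?_, fun u hu => ?_⟩)
  · rintro s ⟨hs, hagree⟩
    exact le_min (hs.trans (min_le_left _ _))
      (le_tau (hs.trans (min_le_right _ _)) fun t ht => (hagree t ht).symm)
  · exact min_le_min_left r y.tau_le_ρ
  · exact (y.apply_eq_of_lt_tau (hu.trans_le (min_le_right _ _))).symm

theorem wedgeρ_of_tau_lt {y₁ y₂ : UTree C z} (h : y₁.tau < y₂.tau) : wedgeρ y₁ y₂ = y₁.tau := by
  refine le_antisymm (csSup_le (agreeSet_nonempty _ _) ?_) (le_wedgeρ ⟨?_, fun u hu => ?_⟩)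
  · rintro s ⟨hs, hagree⟩
    by_contra! hlt
    refine y₁.apply_tau_ne (hlt.trans_le (hs.trans (min_le_left _ _))) ?_
    rw [hagree _ hlt, y₂.apply_eq_of_lt_tau h]
  · exact le_min y₁.tau_le_ρ (h.le.trans y₂.tau_le_ρ)
  · rw [y₁.apply_eq_of_lt_tau hu, y₂.apply_eq_of_lt_tau (hu.trans h)]

theorem dist_cconst (r : ℝ) (y : UTree C z) :
    dist (cconst r) y = r + y.ρ - 2 * min r y.tau := by
  rw [dist_def, wedgeρ_cconst]
  rfl

theorem dist_cconst_cconst (p q : ℝ) : dist (cconst p : UTree C z) (cconst q) = |p - q| := by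
  rw [dist_cconst, tau_cconst]
  show p + q - 2 * min p q = |p - q|
  rcases le_total p q with h | h
  · rw [min_eq_left h, abs_of_nonpos (sub_nonpos.2 h)]
    ring
  · rw [min_eq_right h, abs_of_nonneg (sub_nonneg.2 h)]
    ring

theorem isClosed_Pset (a : UTree C z) : IsClosed (Pset a) := isClosed_closure

theorem exists_Pset_inter_Ioo_eq_empty (a : UTree C z) (t : ℝ) :
    ∃ ε > 0, Pset a ∩ Ioo t (t + ε) = ∅ := by
  obtain ⟨ε, hε, h⟩ := a.exists_const_Icc t
  refine ⟨ε, hε, ?_⟩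
  rw [← not_nonempty_iff_eq_empty, Pset, closure_inter_open_nonempty_iff isOpen_Ioo]
  rintro ⟨u, ⟨-, hbad⟩, hu⟩
  obtain ⟨v, hv, w, hw, hvw⟩ := hbad (u - t) (by linarith [hu.1])
  exact hvw ((h v ⟨by linarith [hv.1], by linarith [hv.2, hu.2]⟩).trans
    (h w ⟨by linarith [hw.1], by linarith [hw.2, hu.2]⟩).symm)

theorem Pset_countable (a : UTree C z) : (Pset a).Countable := by
  refine (countable_setOfPred_isolated_right_within (s := Pset a)).mono fun t ht => ?_
  refine ⟨ht, ?_⟩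
  obtain ⟨ε, hε, h⟩ := a.exists_Pset_inter_Ioo_eq_empty t
  rw [← empty_mem_iff_bot, mem_nhdsWithin]
  exact ⟨Iio (t + ε), isOpen_Iio, lt_add_of_pos_right t hε,
    fun u ⟨hu, hPu, htu⟩ => h.subset ⟨hPu, htu, hu⟩⟩

theorem cbDeriv_Pset_eq_empty_iff {a : UTree C z} {α : Ordinal} :
    cbDeriv (Pset a) α = ∅ ↔ comp a ≤ α :=
  ⟨cbRank_le_of_cbDeriv_eq_empty,
    cbDeriv_eq_empty_of_cbRank_le a.isClosed_Pset a.Pset_countable⟩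

theorem eventually_apply_eq_of_notMem_badSet {a : UTree C z} {t : ℝ} (h : t ∉ badSet a)
    (ht : t ≠ a.ρ) : ∀ᶠ u in 𝓝[≤] t, a.f u = a.f t := by
  rcases ht.lt_or_gt with hlt | hgt
  · simp only [badSet, mem_ofPred_eq, not_and, not_forall, not_exists, not_not] at h
    obtain ⟨ε, hε, hconst⟩ := h hlt
    exact mem_nhdsLE_iff_exists_Icc_subset.2
      ⟨t - ε, by linarith, fun u hu => hconst u hu t ⟨by linarith, le_rfl⟩⟩
  · filter_upwards [nhdsWithin_le_nhds (Ioi_mem_nhds hgt)] with u hu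
    rw [a.apply_eq_of_ge u hu.le, a.apply_eq_of_ge t hgt.le]

theorem notMem_badSet_of_eventually {a : UTree C z} {t : ℝ}
    (h : ∀ᶠ u in 𝓝[≤] t, a.f u = a.f t) : t ∉ badSet a := by
  rintro ⟨-, hbad⟩
  obtain ⟨l, hl, hsub⟩ := mem_nhdsLE_iff_exists_Icc_subset.1 h
  obtain ⟨u, hu, v, hv, huv⟩ := hbad (t - l) (by linarith)
  rw [sub_sub_cancel] at hu hv
  exact huv ((hsub hu).trans (hsub hv).symm)

theorem comp_le_of_badSet_subset {y y₁ y₂ y₃ : UTree C z} {p : ℝ} {α : Ordinal} (hα : 1 ≤ α)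
    (hsub : badSet y ⊆ badSet y₁ ∪ badSet y₂ ∪ badSet y₃ ∪ {p})
    (h₁ : comp y₁ ≤ α) (h₂ : comp y₂ ≤ α) (h₃ : comp y₃ ≤ α) : comp y ≤ α := by
  rw [← cbDeriv_Pset_eq_empty_iff] at h₁ h₂ h₃ ⊢
  have hP : Pset y ⊆ Pset y₁ ∪ Pset y₂ ∪ Pset y₃ ∪ {p} := by
    simpa only [Pset, closure_union, closure_singleton] using closure_mono hsub
  have hclosed₁₂ := y₁.isClosed_Pset.union y₂.isClosed_Pset
  refine subset_empty_iff.1 ((cbDeriv_mono hP α).trans (subset_empty_iff.2 ?_))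
  refine cbDeriv_union_eq_empty (hclosed₁₂.union y₃.isClosed_Pset) isClosed_singleton ?_
    (cbDeriv_singleton_of_one_le p hα)
  exact cbDeriv_union_eq_empty hclosed₁₂ y₃.isClosed_Pset
    (cbDeriv_union_eq_empty y₁.isClosed_Pset y₂.isClosed_Pset h₁ h₂) h₃

section Relabel

open scoped Classical

def relabel (a b y : UTree C z) : UTree C z where
  ρ := y.ρ
  f t := if t < y.ρ then Equiv.swap (a.f t) (b.f t) (y.f t) else z
  apply_eq_of_ge t ht := if_neg (not_lt.2 ht)
  eventually_zero := by
    obtain ⟨sy, hsy, hy⟩ := y.eventually_zero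
    obtain ⟨sa, -, ha⟩ := a.eventually_zero
    obtain ⟨sb, -, hb⟩ := b.eventually_zero
    refine ⟨min sy (min sa sb), (min_le_left _ _).trans hsy, fun t ht => ?_⟩
    simp only [lt_min_iff] at ht
    split_ifs
    · rw [hy t ht.1, ha t ht.2.1, hb t ht.2.2, Equiv.swap_self, Equiv.refl_apply]
    · rfl
  piecewise_const t ht := by
    obtain ⟨εy, hεy, hy⟩ := y.piecewise_const t ht
    obtain ⟨εa, hεa, ha⟩ := a.exists_const_Icc t
    obtain ⟨εb, hεb, hb⟩ := b.exists_const_Icc t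
    refine ⟨min εy (min εa εb), lt_min hεy (lt_min hεa hεb), fun u hu₁ hu₂ hu₃ => ?_⟩
    simp only [← min_add_add_left, le_min_iff] at hu₂
    rw [if_pos hu₃, if_pos ht, hy u hu₁ hu₂.1 hu₃, ha u ⟨hu₁, hu₂.2.1⟩, hb u ⟨hu₁, hu₂.2.2⟩]

@[simp]
theorem relabel_ρ (a b y : UTree C z) : (relabel a b y).ρ = y.ρ := rfl

theorem relabel_apply_of_lt (a b y : UTree C z) {t : ℝ} (ht : t < y.ρ) :
    (relabel a b y).f t = Equiv.swap (a.f t) (b.f t) (y.f t) :=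
  if_pos ht

theorem relabel_relabel (a b y : UTree C z) : relabel a b (relabel a b y) = y := by
  refine ext' rfl (funext fun t => ?_)
  by_cases ht : t < y.ρ
  · rw [relabel_apply_of_lt a b (relabel a b y) ht, relabel_apply_of_lt a b y ht,
      Equiv.swap_apply_self]
  · exact (if_neg ht).trans (y.apply_eq_of_ge t (not_lt.1 ht)).symm

theorem relabel_self_left {a b : UTree C z} (hab : a.ρ = b.ρ) : relabel a b a = b := by
  refine ext' hab (funext fun t => ?_)
  by_cases ht : t < a.ρ
  · rw [relabel_apply_of_lt a b a ht, Equiv.swap_apply_left]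
  · exact (if_neg ht).trans (b.apply_eq_of_ge t (hab ▸ not_lt.1 ht)).symm

theorem relabel_cconst {a b : UTree C z} {r : ℝ} (h : ∀ t < r, a.f t = b.f t) :
    relabel a b (cconst r) = cconst r := by
  refine ext' rfl (funext fun t => ?_)
  by_cases ht : t < r
  · rw [relabel_apply_of_lt a b _ ht, h t ht, Equiv.swap_self, Equiv.refl_apply]
  · exact if_neg ht

theorem agreeSet_relabel (a b y₁ y₂ : UTree C z) :
    agreeSet (relabel a b y₁) (relabel a b y₂) = agreeSet y₁ y₂ := by
  ext s
  simp only [agreeSet, mem_ofPred_eq, relabel_ρ, and_congr_right_iff]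
  refine fun hs => forall₂_congr fun u hu => ?_
  have hu₁ : u < y₁.ρ := hu.trans_le (hs.trans (min_le_left _ _))
  have hu₂ : u < y₂.ρ := hu.trans_le (hs.trans (min_le_right _ _))
  rw [relabel_apply_of_lt a b y₁ hu₁, relabel_apply_of_lt a b y₂ hu₂]
  exact (Equiv.swap _ _).injective.eq_iff

theorem dist_relabel (a b y₁ y₂ : UTree C z) :
    dist (relabel a b y₁) (relabel a b y₂) = dist y₁ y₂ := by
  rw [dist_def, dist_def, wedgeρ, wedgeρ, agreeSet_relabel, relabel_ρ, relabel_ρ]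

theorem badSet_relabel_subset {a b : UTree C z} (hab : a.ρ = b.ρ) (y : UTree C z) :
    badSet (relabel a b y) ⊆ badSet y ∪ badSet a ∪ badSet b ∪ {a.ρ} := by
  intro t ht
  by_contra! hcon
  simp only [mem_union, mem_singleton_iff, not_or] at hcon
  obtain ⟨⟨⟨hy, ha⟩, hb⟩, hρ⟩ := hcon
  have htρ : t < y.ρ := ht.1
  refine notMem_badSet_of_eventually ?_ ht
  filter_upwards [eventually_apply_eq_of_notMem_badSet hy htρ.ne,
    eventually_apply_eq_of_notMem_badSet ha hρ,
    eventually_apply_eq_of_notMem_badSet hb (hab ▸ hρ),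
    nhdsWithin_le_nhds (Iio_mem_nhds htρ)] with u hyu hau hbu hu
  rw [relabel_apply_of_lt a b y hu, relabel_apply_of_lt a b y htρ, hyu, hau, hbu]

theorem mapsTo_relabel_level {a b : UTree C z} {α : Ordinal} (hα : 1 ≤ α) (hab : a.ρ = b.ρ)
    (ha : a ∈ level z α) (hb : b ∈ level z α) : MapsTo (relabel a b) (level z α) (level z α) :=
  fun _ hy => comp_le_of_badSet_subset hα (badSet_relabel_subset hab _) hy ha hb

end Relabel

def shift (s : ℝ) (y : UTree C z) : UTree C z where
  ρ := y.ρ + s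
  f t := y.f (t - s)
  apply_eq_of_ge t ht := y.apply_eq_of_ge _ (by linarith)
  eventually_zero := by
    obtain ⟨s₀, hs₀, h₀⟩ := y.eventually_zero
    exact ⟨s₀ + s, by linarith, fun t ht => h₀ _ (by linarith)⟩
  piecewise_const t ht := by
    obtain ⟨ε, hε, h⟩ := y.piecewise_const (t - s) (by linarith)
    exact ⟨ε, hε, fun u hu₁ hu₂ hu₃ => h _ (by linarith) (by linarith) (by linarith)⟩

@[simp]
theorem shift_ρ (s : ℝ) (y : UTree C z) : (shift s y).ρ = y.ρ + s := rfl

@[simp]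
theorem shift_f (s : ℝ) (y : UTree C z) (t : ℝ) : (shift s y).f t = y.f (t - s) := rfl

theorem shift_shift (s s' : ℝ) (y : UTree C z) : shift s (shift s' y) = shift (s' + s) y :=
  ext' (add_assoc _ _ _) (funext fun t => by simp only [shift_f, sub_add_eq_sub_sub_swap])

theorem shift_zero (y : UTree C z) : shift 0 y = y :=
  ext' (add_zero _) (funext fun t => by simp only [shift_f, sub_zero])

theorem tau_shift (s : ℝ) (y : UTree C z) : (shift s y).tau = y.tau + s := by
  refine le_antisymm ?_
    (le_tau (by simp [y.tau_le_ρ]) fun t ht => y.apply_eq_of_lt_tau (by linarith))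
  rcases y.tau_le_ρ.eq_or_lt with heq | hlt
  · simpa only [shift_ρ, heq] using (shift s y).tau_le_ρ
  · by_contra! h
    exact y.apply_tau_ne hlt (by simpa using (shift s y).apply_eq_of_lt_tau h)

theorem agreeSet_shift (s : ℝ) (y₁ y₂ : UTree C z) :
    agreeSet (shift s y₁) (shift s y₂) = (fun t => t + s) '' agreeSet y₁ y₂ := by
  ext t
  simp only [image_add_right, mem_preimage, agreeSet, mem_ofPred_eq, shift_ρ, shift_f,
    min_add_add_right]
  constructor
  · rintro ⟨h₁, h₂⟩
    exact ⟨by linarith, fun u hu => by simpa using h₂ (u + s) (by linarith)⟩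
  · rintro ⟨h₁, h₂⟩
    exact ⟨by linarith, fun u hu => h₂ _ (by linarith)⟩

theorem wedgeρ_shift (s : ℝ) (y₁ y₂ : UTree C z) :
    wedgeρ (shift s y₁) (shift s y₂) = wedgeρ y₁ y₂ + s := by
  rw [wedgeρ, agreeSet_shift, wedgeρ]
  exact ((OrderIso.addRight s).map_csSup' (agreeSet_nonempty y₁ y₂)
    (agreeSet_bddAbove y₁ y₂)).symm

theorem badSet_shift (s : ℝ) (y : UTree C z) :
    badSet (shift s y) = (fun t => t + s) '' badSet y := by
  ext t
  simp only [image_add_right, mem_preimage, badSet, mem_ofPred_eq, shift_ρ, shift_f]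
  refine and_congr ⟨fun h => by linarith, fun h => by linarith⟩ (forall₂_congr fun ε _ => ?_)
  constructor
  · rintro ⟨u, hu, v, hv, huv⟩
    exact ⟨u - s, ⟨by linarith [hu.1], by linarith [hu.2]⟩,
      v - s, ⟨by linarith [hv.1], by linarith [hv.2]⟩, huv⟩
  · rintro ⟨u, hu, v, hv, huv⟩
    exact ⟨u + s, ⟨by linarith [hu.1], by linarith [hu.2]⟩,
      v + s, ⟨by linarith [hv.1], by linarith [hv.2]⟩, by simpa using huv⟩

theorem comp_shift (s : ℝ) (y : UTree C z) : comp (shift s y) = comp y := by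
  have he : (fun t => t + s) = Homeomorph.addRight s := rfl
  rw [comp, comp, Pset, Pset, badSet_shift, he, ← Homeomorph.image_closure, cbRank_image]

/-- The reflection of the tree in the point `c_u` of the canonical line: the branch of `y` off
the line is moved, unchanged, from the foot `c_{τ_y}` to the mirror foot `c_{2u - τ_y}`. -/
def rev (u : ℝ) (y : UTree C z) : UTree C z := shift (2 * (u - y.tau)) y

theorem tau_rev (u : ℝ) (y : UTree C z) : (rev u y).tau = 2 * u - y.tau := by
  rw [rev, tau_shift]
  ring

theorem rev_rev (u : ℝ) (y : UTree C z) : rev u (rev u y) = y := by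
  rw [rev, tau_rev, rev, shift_shift]
  convert shift_zero y using 2
  ring

theorem rev_cconst (u r : ℝ) : rev u (cconst r : UTree C z) = cconst (2 * u - r) :=
  ext' (by rw [rev, shift_ρ, tau_cconst]; exact show r + 2 * (u - r) = 2 * u - r by ring) rfl

theorem dist_rev (u : ℝ) (y₁ y₂ : UTree C z) : dist (rev u y₁) (rev u y₂) = dist y₁ y₂ := by
  wlog h : y₁.tau ≤ y₂.tau generalizing y₁ y₂
  · rw [dist_comm, this y₂ y₁ (le_of_not_ge h), dist_comm]
  rcases h.lt_or_eq with hlt | heq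
  · have hlt' : (rev u y₂).tau < (rev u y₁).tau := by
      rw [tau_rev, tau_rev]
      linarith
    rw [dist_def, dist_def, wedgeρ_comm (rev u y₁), wedgeρ_of_tau_lt hlt', wedgeρ_of_tau_lt hlt,
      tau_rev]
    simp only [rev, shift_ρ]
    ring
  · rw [dist_def, dist_def, rev, rev, heq, wedgeρ_shift]
    simp only [shift_ρ]
    ring

theorem mapsTo_rev_level (u : ℝ) (α : Ordinal) : MapsTo (rev u) (level z α) (level z α) :=
  fun y hy => (comp_shift _ y).trans_le hy

section Level

variable {α : Ordinal}

def cconstLevel (α : Ordinal) (r : ℝ) : level z α := ⟨cconst r, cconst_mem_level α⟩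

@[simp]
theorem coe_cconstLevel (r : ℝ) : ((cconstLevel α r : level z α) : UTree C z) = cconst r :=
  rfl

theorem pairIsometric_of_relabel (hα : 1 ≤ α) {a b : UTree C z} (hab : a.ρ = b.ρ)
    (ha : a ∈ level z α) (hb : b ∈ level z α) {x₁ x₂ y₁ y₂ : level z α}
    (h₁ : relabel a b x₁ = (y₁ : UTree C z)) (h₂ : relabel a b x₂ = (y₂ : UTree C z)) :
    PairIsometric x₁ x₂ y₁ y₂ :=
  ⟨.subtypeOfInvolutive _ (relabel_relabel a b) (.of_dist_eq (dist_relabel a b))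
    (mapsTo_relabel_level hα hab ha hb), Subtype.ext h₁, Subtype.ext h₂⟩

theorem pairIsometric_of_rev (u : ℝ) {x₁ x₂ y₁ y₂ : level z α}
    (h₁ : rev u x₁ = (y₁ : UTree C z)) (h₂ : rev u x₂ = (y₂ : UTree C z)) :
    PairIsometric x₁ x₂ y₁ y₂ :=
  ⟨.subtypeOfInvolutive _ (rev_rev u) (.of_dist_eq (dist_rev u)) (mapsTo_rev_level u α),
    Subtype.ext h₁, Subtype.ext h₂⟩

theorem pairIsometric_cconstLevel_of_le_tau (hα : 1 ≤ α) {r : ℝ} {y : level z α}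
    (h : r ≤ (y : UTree C z).tau) :
    PairIsometric (cconstLevel α r) y (cconstLevel α r) (cconstLevel α (y : UTree C z).ρ) :=
  pairIsometric_of_relabel (a := (y : UTree C z)) (b := cconst (y : UTree C z).ρ) hα rfl y.2
    (cconst_mem_level α)
    (relabel_cconst fun _ ht => (y : UTree C z).apply_eq_of_lt_tau (ht.trans_le h))
    (relabel_self_left rfl)

theorem exists_pairIsometric_cconstLevel_of_cconstLevel (hα : 1 ≤ α) (r : ℝ) (y : level z α) :
    ∃ p q, PairIsometric (cconstLevel α r) y (cconstLevel α p) (cconstLevel α q) := by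
  rcases le_or_gt r (y : UTree C z).tau with h | h
  · exact ⟨r, _, pairIsometric_cconstLevel_of_le_tau hα h⟩
  · -- After reflecting in `c_0`, the branch of `y` leaves the line above `c_{-r}`.
    let y' : level z α := ⟨rev 0 y, mapsTo_rev_level 0 α y.2⟩
    have hrev : PairIsometric (cconstLevel α r) y (cconstLevel α (-r)) y' :=
      pairIsometric_of_rev 0 (by rw [coe_cconstLevel, rev_cconst, coe_cconstLevel]; ring_nf) rfl
    have h' : -r ≤ (y' : UTree C z).tau := by
      simp only [y', tau_rev]
      linarith
    exact ⟨-r, _, hrev.trans (pairIsometric_cconstLevel_of_le_tau hα h')⟩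

theorem exists_pairIsometric_cconstLevel (hα : 1 ≤ α) (x₁ x₂ : level z α) :
    ∃ p q, PairIsometric x₁ x₂ (cconstLevel α p) (cconstLevel α q) := by
  obtain ⟨a, ha⟩ := x₁
  have hmaps := mapsTo_relabel_level (a := a) (b := cconst a.ρ) hα rfl ha (cconst_mem_level α)
  have h : PairIsometric ⟨a, ha⟩ x₂ (cconstLevel α a.ρ) ⟨_, hmaps x₂.2⟩ :=
    pairIsometric_of_relabel (a := a) (b := cconst a.ρ) hα rfl ha (cconst_mem_level α)
      (relabel_self_left rfl) rfl
  obtain ⟨p, q, h'⟩ := exists_pairIsometric_cconstLevel_of_cconstLevel hα a.ρ ⟨_, hmaps x₂.2⟩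
  exact ⟨p, q, h.trans h'⟩

theorem pairIsometric_cconstLevel (p q : ℝ) :
    PairIsometric (cconstLevel α p : level z α) (cconstLevel α q) (cconstLevel α 0)
      (cconstLevel α |p - q|) := by
  wlog h : q ≤ p generalizing p q
  · have hrev : PairIsometric (cconstLevel α p : level z α) (cconstLevel α q)
        (cconstLevel α (-p)) (cconstLevel α (-q)) :=
      pairIsometric_of_rev 0 (by simp only [coe_cconstLevel, rev_cconst]; ring_nf)
        (by simp only [coe_cconstLevel, rev_cconst]; ring_nf)
    simpa only [neg_sub_neg, abs_sub_comm] using hrev.trans (this (-p) (-q) (by linarith))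
  rw [abs_of_nonneg (sub_nonneg.2 h)]
  exact pairIsometric_of_rev (p / 2) (by simp only [coe_cconstLevel, rev_cconst]; ring_nf)
    (by simp only [coe_cconstLevel, rev_cconst]; ring_nf)

theorem pairIsometric_cconstLevel_dist (hα : 1 ≤ α) (x₁ x₂ : level z α) :
    PairIsometric x₁ x₂ (cconstLevel α 0) (cconstLevel α (dist x₁ x₂)) := by
  obtain ⟨p, q, h⟩ := exists_pairIsometric_cconstLevel hα x₁ x₂
  have hd : dist x₁ x₂ = |p - q| := h.dist_eq.symm.trans (dist_cconst_cconst p q)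
  exact hd ▸ h.trans (pairIsometric_cconstLevel p q)

theorem pairIsometric_of_dist_eq (hα : 1 ≤ α) {x₁ x₂ y₁ y₂ : level z α}
    (h : dist x₁ x₂ = dist y₁ y₂) : PairIsometric x₁ x₂ y₁ y₂ :=
  (pairIsometric_cconstLevel_dist hα x₁ x₂).trans
    (h ▸ pairIsometric_cconstLevel_dist hα y₁ y₂).symm

end Level

end UTree

theorem stmt9_general (C : Type) (z : C)
    (α : Ordinal) (hα1 : 1 ≤ α)
    (a₁ a₂ b₁ b₂ : ↥(UTree.level z α)) (h : dist a₁ a₂ = dist b₁ b₂) :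
    (∃ ψ : ↥(UTree.level z α) ≃ᵢ ↥(UTree.level z α), ψ a₁ = b₁ ∧ ψ a₂ = b₂) ∧
    (∀ x y : ↥(UTree.level z α), ∃ ψ : ↥(UTree.level z α) ≃ᵢ ↥(UTree.level z α), ψ x = y) := by
  refine ⟨UTree.pairIsometric_of_dist_eq hα1 h, fun x y => ?_⟩
  obtain ⟨ψ, hψ, -⟩ :=
    UTree.pairIsometric_of_dist_eq hα1 (x₁ := x) (x₂ := x) (y₁ := y) (y₂ := y)
      (by rw [dist_self, dist_self])
  exact ⟨ψ, hψ⟩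

/-- `T_κ^{[α]}` is 2-point homogeneous: any pair of points can be sent to any other pair at
the same distance by an isometry; in particular `T_κ^{[α]}` is homogeneous. -/
theorem stmt9 (κ : Cardinal) (hκ : 3 ≤ κ) (C : Type) (z : C) (hC : IsLabelSet κ C)
    (α : Ordinal) (hα1 : 1 ≤ α) (hαc : IsCountableOrdinal α)
    (a₁ a₂ b₁ b₂ : ↥(UTree.level z α)) (h : dist a₁ a₂ = dist b₁ b₂) :
    (∃ ψ : ↥(UTree.level z α) ≃ᵢ ↥(UTree.level z α), ψ a₁ = b₁ ∧ ψ a₂ = b₂) ∧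
    (∀ x y : ↥(UTree.level z α), ∃ ψ : ↥(UTree.level z α) ≃ᵢ ↥(UTree.level z α), ψ x = y) :=
  stmt9_general C z α hα1 a₁ a₂ b₁ b₂ h

end
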